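/- The inverse-odds function x ↦ (1 − Φ(x))/Φ(x) is convex on ℝ. -/

import Mathlib

/-!
Write `f = (1 - Φ)/Φ`. Since `φ' = -x φ` and `Φ' = φ`, we get `f' = -φ/Φ²` and
`f'' = φ (xΦ + 2φ)/Φ³`. The sign of `f''` comes from the identity
`xΦ(x) + φ(x) = ∫_{-∞}^x (x - s) φ(s) ds ≥ 0`, obtained by integrating `-sφ(s) = φ'(s)`.
-/

open MeasureTheory ProbabilityTheory

/-- Standard normal density. -/
noncomputable def phi (x : ℝ) : ℝ := (Real.sqrt (2 * Real.pi))⁻¹ * Real.exp (-x ^ 2 / 2)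

/-- Standard normal CDF. -/
noncomputable def Phi (x : ℝ) : ℝ := ∫ s in Set.Iic x, phi s

/-- Standard normal hazard function (inverse Mills ratio). -/
noncomputable def lam (x : ℝ) : ℝ := phi x / (1 - Phi x)

/-- Mills-ratio-type function `φ(x)/Φ(x)`. -/
noncomputable def mills (x : ℝ) : ℝ := phi x / Phi x

open Set Filter Topology

section IntegralIic

variable {E : Type*} [NormedAddCommGroup E] [NormedSpace ℝ E] [CompleteSpace E]

theorem hasDerivAt_integral_Iic {f : ℝ → E} (hf : Integrable f) {x : ℝ}
    (hcont : ContinuousAt f x) : HasDerivAt (fun y => ∫ s in Iic y, f s) (f x) x := by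
  have hsplit : (fun y => ∫ s in Iic y, f s) =
      fun y => (∫ s in Iic 0, f s) + ∫ s in (0 : ℝ)..y, f s := by
    funext y
    rw [← intervalIntegral.integral_Iic_sub_Iic hf.integrableOn hf.integrableOn, add_sub_cancel]
  rw [hsplit]
  exact (intervalIntegral.integral_hasDerivAt_right hf.intervalIntegrable
    hf.aestronglyMeasurable.stronglyMeasurableAtFilter hcont).const_add _

theorem integral_Iic_of_hasDerivAt_of_integrable {f f' : ℝ → E}
    (hderiv : ∀ x, HasDerivAt f (f' x) x) (hf' : Integrable f') (hf : Integrable f) (x : ℝ) :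
    ∫ s in Iic x, f' s = f x := by
  have hlim : Tendsto f atBot (𝓝 0) :=
    tendsto_zero_of_hasDerivAt_of_integrableOn_Iic (a := 0) (fun y _ => hderiv y)
      hf'.integrableOn hf.integrableOn
  rw [integral_Iic_of_hasDerivAt_of_tendsto' (fun y _ => hderiv y) hf'.integrableOn hlim, sub_zero]

end IntegralIic

theorem phi_eq_gaussianPDFReal : phi = gaussianPDFReal 0 1 := by
  funext x
  simp [phi, gaussianPDFReal]

theorem phi_pos (x : ℝ) : 0 < phi x := by
  rw [phi_eq_gaussianPDFReal]
  exact gaussianPDFReal_pos _ _ _ one_ne_zero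

theorem integrable_phi : Integrable phi :=
  phi_eq_gaussianPDFReal ▸ integrable_gaussianPDFReal 0 1

theorem continuous_phi : Continuous phi := by
  unfold phi
  fun_prop

theorem integrable_id_mul_phi : Integrable fun x => x * phi x := by
  refine ((integrable_mul_exp_neg_mul_sq (by norm_num : (0 : ℝ) < 1 / 2)).const_mul
    (Real.sqrt (2 * Real.pi))⁻¹).congr (ae_of_all _ fun x => ?_)
  simp only [phi]
  rw [show -(1 / 2) * x ^ 2 = -x ^ 2 / 2 by ring]
  ring

theorem hasDerivAt_phi (x : ℝ) : HasDerivAt phi (-(x * phi x)) x := by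
  refine (((hasDerivAt_pow 2 x).fun_neg.div_const 2).exp.const_mul
    (Real.sqrt (2 * Real.pi))⁻¹).congr_deriv ?_
  unfold phi
  push_cast
  ring

theorem integral_Iic_sub_mul_phi (x : ℝ) :
    ∫ s in Iic x, (x - s) * phi s = x * Phi x + phi x := by
  have hint : Integrable fun s => -(s * phi s) := integrable_id_mul_phi.neg
  have hmoment : ∫ s in Iic x, -(s * phi s) = phi x :=
    integral_Iic_of_hasDerivAt_of_integrable hasDerivAt_phi hint integrable_phi x
  simp_rw [sub_mul, sub_eq_add_neg]
  rw [integral_add (integrable_phi.const_mul x).integrableOn hint.integrableOn,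
    integral_const_mul, hmoment, Phi]

theorem mul_Phi_add_phi_nonneg (x : ℝ) : 0 ≤ x * Phi x + phi x := by
  rw [← integral_Iic_sub_mul_phi]
  exact setIntegral_nonneg measurableSet_Iic fun s (hs : s ≤ x) =>
    mul_nonneg (sub_nonneg.2 hs) (phi_pos s).le

theorem Phi_pos (x : ℝ) : 0 < Phi x := by
  rw [Phi, setIntegral_pos_iff_support_of_nonneg_ae (ae_of_all _ fun s => (phi_pos s).le)
    integrable_phi.integrableOn, Function.support_eq_univ fun s => (phi_pos s).ne', univ_inter]
  simp

theorem hasDerivAt_Phi (x : ℝ) : HasDerivAt Phi (phi x) x :=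
  hasDerivAt_integral_Iic integrable_phi continuous_phi.continuousAt

theorem hasDerivAt_one_sub_Phi_div_Phi (x : ℝ) :
    HasDerivAt (fun x => (1 - Phi x) / Phi x) (-phi x / Phi x ^ 2) x :=
  (((hasDerivAt_Phi x).const_sub 1).fun_div (hasDerivAt_Phi x) (Phi_pos x).ne').congr_deriv
    (by ring)

theorem hasDerivAt_neg_phi_div_Phi_sq (x : ℝ) :
    HasDerivAt (fun x => -phi x / Phi x ^ 2) (phi x * (x * Phi x + 2 * phi x) / Phi x ^ 3) x := by
  have hPhi := (Phi_pos x).ne'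
  refine ((hasDerivAt_phi x).fun_neg.fun_div ((hasDerivAt_Phi x).fun_pow 2)
    (pow_ne_zero 2 hPhi)).congr_deriv ?_
  field_simp
  ring

/-- the inverse-odds function `x ↦ (1 − Φ(x))/Φ(x)` is convex on `ℝ`. -/
theorem stmt_16 : ConvexOn ℝ Set.univ (fun x => (1 - Phi x) / Phi x) := by
  refine convexOn_of_hasDerivWithinAt2_nonneg convex_univ
    (fun x _ => (hasDerivAt_one_sub_Phi_div_Phi x).continuousAt.continuousWithinAt)
    (fun x _ => (hasDerivAt_one_sub_Phi_div_Phi x).hasDerivWithinAt)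
    (fun x _ => (hasDerivAt_neg_phi_div_Phi_sq x).hasDerivWithinAt) fun x _ => ?_
  have hphi := phi_pos x
  have := mul_Phi_add_phi_nonneg x
  exact div_nonneg (mul_nonneg hphi.le (by linarith)) (pow_pos (Phi_pos x) 3).le
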